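/- Let X be a pointed metric space, Y a real Banach space, and 1 < p < ∞. For a Lipschitz map T : X → Y* with T(0) = 0, define the linear functional φ_T on the space ℱ(X;Y) of Y-valued molecules by φ_T(m) = Σ_{x∈X} ⟨T(x), m(x)⟩. Then T ↦ φ_T is a bijection between the set of Lipschitz-Cohen strongly p-summing maps T : X → Y* (with T(0) = 0) and the set of linear functionals on ℱ(X;Y) that are bounded with respect to μ_p, and this bijection is isometric: sup{ |φ_T(m)| : m a molecule with μ_p(m) ≤ 1 } = d_p^L(T). In other words, 𝒟_p^L(X;Y*) is isometrically the dual space of (ℱ(X;Y), μ_p). -/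

import Mathlib

/-!
On a representation `m = ∑ λᵢ yᵢ m_{xᵢ x'ᵢ}` one has `φ_T(m) = ∑ λᵢ ⟨ι yᵢ, T xᵢ - T x'ᵢ⟩` with
`ι : Y → Y**`, so the Lipschitz-Cohen inequality tested on `zᵢ = ι yᵢ` gives `|φ_T m| ≤ C μ_p(m)`.
Conversely a `μ_p`-bounded functional `φ` is `φ_T` for `T x = φ(· m_{x x₀})`, and
`|φ_T| ≤ S μ_p` is the Lipschitz-Cohen inequality with constant `S`, but only for test
functionals `zᵢ ∈ ι(Y)`. Passing to arbitrary `zᵢ ∈ Y**` is the heart of the proof: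
`sup_{‖g‖ ≤ 1} ‖(g yᵢ)ᵢ‖_q` is the norm of `a ↦ ∑ aᵢ yᵢ` on `ℓ_pⁿ` (Hölder), hence, through a
finite net `A` of the unit ball of `ℓ_pⁿ`, comparable to `max_{a ∈ A} ‖∑ aᵢ yᵢ‖`. A functional
dominated by that maximum factors, by Hahn–Banach, through `ℓ_∞(A; Y)`, whose dual is
`ℓ_1(A; Y*)`, and in this form the bound visibly holds on `(Y**)ⁿ`. Both estimates together give
`‖φ_T‖ = d_p^L(T)`.
-/

open scoped BigOperators NNReal

noncomputable section

variable {X : Type*} [MetricSpace X] {Y : Type*} [NormedAddCommGroup Y] [NormedSpace ℝ Y]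

/-- The atom `y·m_{x x'}`. -/
def molAtom (x x' : X) (y : Y) : X →₀ Y :=
  Finsupp.single x y - Finsupp.single x' y

/-- The space `ℱ(X;Y)` of `Y`-valued molecules on `X`. -/
def MolSpace (X : Type*) (Y : Type*) [NormedAddCommGroup Y] [NormedSpace ℝ Y] :
    Submodule ℝ (X →₀ Y) :=
  LinearMap.ker (Finsupp.lsum ℝ fun _ : X => (LinearMap.id : Y →ₗ[ℝ] Y))

/-- `sup_{g ∈ B_{Y*}} (Σ_i |g(y_i)|^q)^{1/q}`. -/
def dualBallSup (q : ℝ) {n : ℕ} (y : Fin n → Y) : ℝ :=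
  ⨆ g : {g : Y →L[ℝ] ℝ // ‖g‖ ≤ 1}, (∑ i, |g.1 (y i)| ^ q) ^ (1 / q)

/-- The norm `μ_p` on molecules (`1 < p < ∞`, `q = p*`). -/
def muNorm (p q : ℝ) (m : X →₀ Y) : ℝ :=
  sInf {c : ℝ | ∃ (n : ℕ) (lam : Fin n → ℝ) (y : Fin n → Y) (x x' : Fin n → X),
    m = ∑ i, lam i • molAtom (x i) (x' i) (y i) ∧
    c = (∑ i, |lam i| ^ p * dist (x i) (x' i) ^ p) ^ (1 / p) * dualBallSup q y}

/-- `T` is Lipschitz-Cohen strongly `p`-summing with constant `C` (`q = p*`). -/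
def LipCohenCond {X : Type*} [MetricSpace X] {Z : Type*} [NormedAddCommGroup Z]
    [NormedSpace ℝ Z] (p q : ℝ) (T : X → Z) (C : ℝ) : Prop :=
  ∀ (n : ℕ) (x x' : Fin n → X) (zs : Fin n → (Z →L[ℝ] ℝ)) (lam : Fin n → ℝ),
    (∀ i, 0 < lam i) →
    ∑ i, lam i * |zs i (T (x i)) - zs i (T (x' i))| ≤
      C * (∑ i, lam i ^ p * dist (x i) (x' i) ^ p) ^ (1 / p) * dualBallSup q zs

/-- The linear functional `φ_T` on `ℱ(X;Y)` induced by `T : X → Y*`: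
`φ_T(m) = Σ_{x ∈ X} ⟨T(x), m(x)⟩`. -/
def phiT (T : X → (Y →L[ℝ] ℝ)) : MolSpace X Y →ₗ[ℝ] ℝ :=
  (Finsupp.lsum ℝ fun x : X => (T x).toLinearMap).comp (MolSpace X Y).subtype

theorem exists_sign_mul_eq_abs (c : ℝ) : ∃ s : ℝ, |s| = 1 ∧ s * c = |c| := by
  rcases le_total 0 c with hc | hc
  · exact ⟨1, by simp, by simp [abs_of_nonneg hc]⟩
  · exact ⟨-1, by simp, by simp [abs_of_nonpos hc]⟩

theorem exists_strongDual_comp_eq {E G : Type*} [AddCommGroup E] [Module ℝ E]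
    [NormedAddCommGroup G] [NormedSpace ℝ G] (f : E →ₗ[ℝ] ℝ) (Λ : E →ₗ[ℝ] G) {K : ℝ}
    (hK : 0 ≤ K) (h : ∀ e, f e ≤ K * ‖Λ e‖) :
    ∃ F : G →L[ℝ] ℝ, ‖F‖ ≤ K ∧ ∀ e, F (Λ e) = f e := by
  have habs : ∀ e, |f e| ≤ K * ‖Λ e‖ := fun e =>
    abs_le.2 ⟨by linarith [show -f e ≤ K * ‖Λ e‖ by simpa using h (-e)], h e⟩
  have hker : LinearMap.ker Λ ≤ LinearMap.ker f := fun e he => by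
    simpa [LinearMap.mem_ker.1 he] using habs e
  set f₀ : LinearMap.range Λ →ₗ[ℝ] ℝ :=
    (LinearMap.ker Λ).liftQ f hker ∘ₗ Λ.quotKerEquivRange.symm.toLinearMap
  have hf₀ : ∀ e, f₀ ⟨Λ e, LinearMap.mem_range_self Λ e⟩ = f e := fun e => by
    simp [f₀, LinearMap.quotKerEquivRange_symm_apply_image]
  have hbound : ∀ w, ‖f₀ w‖ ≤ K * ‖w‖ := by
    rintro ⟨_, e, rfl⟩
    simpa [hf₀] using habs e
  obtain ⟨F, hF, hnorm⟩ := exists_extension_norm_eq _ (f₀.mkContinuous K hbound)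
  exact ⟨F, hnorm ▸ LinearMap.mkContinuous_norm_le _ hK _, fun e => (hF _).trans (hf₀ e)⟩

theorem exists_norm_sub_le_apply {E : Type*} [NormedAddCommGroup E] [NormedSpace ℝ E]
    (g : E →L[ℝ] ℝ) {η : ℝ} (hη : 0 < η) : ∃ w : E, ‖w‖ ≤ 1 ∧ ‖g‖ - η ≤ g w := by
  rcases le_or_gt ‖g‖ η with hg | hg
  · exact ⟨0, by simp, by simpa using hg⟩
  obtain ⟨w, hw, hgw⟩ := g.exists_lt_apply_of_lt_opNorm (r := ‖g‖ - η) (by linarith)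
  rw [Real.norm_eq_abs] at hgw
  rcases le_or_gt 0 (g w) with hw0 | hw0
  · exact ⟨w, hw.le, by rw [abs_of_nonneg hw0] at hgw; exact hgw.le⟩
  · exact ⟨-w, by simpa using hw.le, by rw [abs_of_neg hw0] at hgw; simpa using hgw.le⟩

theorem sum_norm_comp_single_le {ι E : Type*} [Fintype ι] [DecidableEq ι] [NormedAddCommGroup E]
    [NormedSpace ℝ E] (F : (ι → E) →L[ℝ] ℝ) :
    ∑ a, ‖F.comp (ContinuousLinearMap.single ℝ (fun _ => E) a)‖ ≤ ‖F‖ := by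
  refine le_of_forall_pos_le_add fun ε hε => ?_
  have hη : 0 < ε / (Fintype.card ι + 1) := by positivity
  choose w hw hgw using fun a =>
    exists_norm_sub_le_apply (F.comp (ContinuousLinearMap.single ℝ (fun _ => E) a)) hη
  have hF : F w = ∑ a, F.comp (ContinuousLinearMap.single ℝ (fun _ => E) a) (w a) := by
    conv_lhs => rw [← Finset.univ_sum_single w]
    simp
  have hcard : (Fintype.card ι : ℝ) * (ε / (Fintype.card ι + 1)) ≤ ε := by
    rw [mul_div_assoc', div_le_iff₀ (by positivity)]
    nlinarith
  calc ∑ a, ‖F.comp (ContinuousLinearMap.single ℝ (fun _ => E) a)‖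
      ≤ ∑ a, (F.comp (ContinuousLinearMap.single ℝ (fun _ => E) a) (w a)
          + ε / (Fintype.card ι + 1)) := Finset.sum_le_sum fun a _ => by linarith [hgw a]
    _ = F w + Fintype.card ι * (ε / (Fintype.card ι + 1)) := by
        simp [Finset.sum_add_distrib, hF]
    _ ≤ ‖F‖ + ε := by
        gcongr
        exact (le_abs_self _).trans ((F.le_opNorm w).trans
          (mul_le_of_le_one_right (norm_nonneg _) ((pi_norm_le_iff_of_nonneg zero_le_one).2 hw)))

section DualBallSup

variable {p q : ℝ} {n : ℕ}

instance : Nonempty {g : Y →L[ℝ] ℝ // ‖g‖ ≤ 1} := ⟨⟨0, by simp⟩⟩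

theorem dualBallSup_nonneg (y : Fin n → Y) : 0 ≤ dualBallSup q y :=
  Real.iSup_nonneg fun _ => by positivity

theorem dualBallSup_le {y : Fin n → Y} {R : ℝ}
    (h : ∀ g : Y →L[ℝ] ℝ, ‖g‖ ≤ 1 → (∑ i, |g (y i)| ^ q) ^ (1 / q) ≤ R) :
    dualBallSup q y ≤ R :=
  ciSup_le fun g => h g.1 g.2

theorem le_dualBallSup (hq : 0 < q) (y : Fin n → Y) {g : Y →L[ℝ] ℝ} (hg : ‖g‖ ≤ 1) :
    (∑ i, |g (y i)| ^ q) ^ (1 / q) ≤ dualBallSup q y := by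
  refine le_ciSup (f := fun g : {g : Y →L[ℝ] ℝ // ‖g‖ ≤ 1} => (∑ i, |g.1 (y i)| ^ q) ^ (1 / q))
    ⟨(∑ i, ‖y i‖ ^ q) ^ (1 / q), ?_⟩ ⟨g, hg⟩
  rintro _ ⟨g, rfl⟩
  refine Real.rpow_le_rpow (by positivity) (Finset.sum_le_sum fun i _ => ?_) (by positivity)
  refine Real.rpow_le_rpow (abs_nonneg _) ?_ hq.le
  simpa using (g.1.le_opNorm (y i)).trans (mul_le_of_le_one_left (norm_nonneg _) g.2)

/-- Hölder's inequality against the norming functional of `∑ i, c i • y i`. -/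
theorem norm_sum_smul_le_dualBallSup (hpq : p.HolderConjugate q) (c : Fin n → ℝ) (y : Fin n → Y) :
    ‖∑ i, c i • y i‖ ≤ (∑ i, |c i| ^ p) ^ (1 / p) * dualBallSup q y := by
  obtain ⟨g, hg, hgy⟩ := exists_dual_vector'' ℝ (∑ i, c i • y i)
  rw [RCLike.ofReal_real_eq_id, id] at hgy
  calc ‖∑ i, c i • y i‖ = ∑ i, c i * g (y i) := by
        rw [← hgy, map_sum]
        simp
    _ ≤ (∑ i, |c i| ^ p) ^ (1 / p) * (∑ i, |g (y i)| ^ q) ^ (1 / q) :=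
      Real.inner_le_Lp_mul_Lq _ _ _ hpq
    _ ≤ _ := by gcongr; exact le_dualBallSup hpq.symm.pos y hg

/-- The converse of `norm_sum_smul_le_dualBallSup`: `dualBallSup q y` is the norm of
`c ↦ ∑ i, c i • y i` on `ℓ_p^n`, by the equality case of Hölder's inequality. -/
theorem dualBallSup_le_of_norm_sum_smul_le (hpq : p.HolderConjugate q) {y : Fin n → Y} {R : ℝ}
    (h : ∀ b : Fin n → ℝ, ∑ i, |b i| ^ p ≤ 1 → ‖∑ i, b i • y i‖ ≤ R) :
    dualBallSup q y ≤ R := by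
  refine dualBallSup_le fun g hg => ?_
  choose s hs_abs hs using fun i => exists_sign_mul_eq_abs (g (y i))
  obtain ⟨⟨b, hb, hbsum⟩, -⟩ := NNReal.isGreatest_Lp Finset.univ (fun i => ‖g (y i)‖₊) hpq.symm
  have key : (∑ i, |g (y i)| ^ q) ^ (1 / q) = g (∑ i, (s i * b i) • y i) := by
    have := congrArg NNReal.toReal hbsum
    push_cast at this
    simp only [Real.norm_eq_abs] at this
    rw [← this, map_sum]
    refine Finset.sum_congr rfl fun i _ => ?_
    rw [map_smul, smul_eq_mul, ← hs i]
    ring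
  have hb' : ∑ i, |s i * b i| ^ p ≤ 1 := by
    simpa [abs_mul, hs_abs] using (show ∑ i, (b i : ℝ) ^ p ≤ 1 by exact_mod_cast hb)
  rw [key]
  exact (le_abs_self _).trans <| (g.le_opNorm _).trans <|
    (mul_le_of_le_one_left (norm_nonneg _) hg).trans (h _ hb')

theorem dualBallSup_fin_one_le (hq : 0 < q) (y : Y) : dualBallSup q (fun _ : Fin 1 => y) ≤ ‖y‖ :=
  dualBallSup_le fun g hg => by
    rw [Fin.sum_univ_one, one_div, Real.rpow_rpow_inv (abs_nonneg _) hq.ne']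
    exact (g.le_opNorm y).trans (mul_le_of_le_one_left (norm_nonneg y) hg)

theorem dualBallSup_inclusionInDoubleDual_le (hq : 0 < q) (y : Fin n → Y) :
    dualBallSup q (fun i => NormedSpace.inclusionInDoubleDual ℝ Y (y i)) ≤ dualBallSup q y :=
  dualBallSup_le fun g hg =>
    le_dualBallSup hq y (g := g.comp (NormedSpace.inclusionInDoubleDual ℝ Y)) <|
      (g.opNorm_comp_le _).trans <|
        mul_le_one₀ hg (norm_nonneg _) (NormedSpace.inclusionInDoubleDual_norm_le ℝ Y)

end DualBallSup

section CombinationMap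

variable {p q : ℝ} {n : ℕ}

theorem exists_finset_net_lpBall (hp : 0 < p) {δ : ℝ} (hδ : 0 < δ) :
    ∃ A : Finset (Fin n → ℝ), (∀ a ∈ A, ∑ i, |a i| ^ p ≤ 1) ∧
      ∀ b : Fin n → ℝ, ∑ i, |b i| ^ p ≤ 1 → ∃ a ∈ A, (∑ i, |b i - a i| ^ p) ^ (1 / p) < δ := by
  have hsum : Continuous fun c : Fin n → ℝ => ∑ i, |c i| ^ p :=
    continuous_finsetSum _ fun i _ =>
      (continuous_abs.comp (continuous_apply i)).rpow_const fun _ => Or.inr hp.le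
  have hcont := hsum.rpow_const (p := 1 / p) fun _ => Or.inr (by positivity)
  obtain ⟨η, hη, hηδ⟩ := Metric.continuousAt_iff.1 (hcont.continuousAt (x := 0)) δ hδ
  set B := {b : Fin n → ℝ | ∑ i, |b i| ^ p ≤ 1}
  have hB : IsCompact B := by
    refine Metric.isCompact_of_isClosed_isBounded (isClosed_le hsum continuous_const)
      ((Metric.isBounded_closedBall (x := 0) (r := 1)).subset fun b hb => ?_)
    refine mem_closedBall_zero_iff.2 ((pi_norm_le_iff_of_nonneg zero_le_one).2 fun i => ?_)
    by_contra! h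
    rw [Real.norm_eq_abs] at h
    have := (Real.one_lt_rpow h hp).trans_le <|
      (Finset.single_le_sum (f := fun j => |b j| ^ p) (fun j _ => by positivity)
        (Finset.mem_univ i)).trans hb
    exact this.false
  obtain ⟨t, htB, ht, hcover⟩ := finite_cover_balls_of_compact hB hη
  refine ⟨ht.toFinset, fun a ha => htB (ht.mem_toFinset.1 ha), fun b hb => ?_⟩
  obtain ⟨a, ha, hba⟩ := Set.mem_iUnion₂.1 (hcover hb)
  refine ⟨a, ht.mem_toFinset.2 ha, ?_⟩
  have := hηδ (x := b - a) (by simpa [dist_eq_norm] using hba)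
  rw [Real.dist_eq] at this
  simp only [Pi.zero_apply, abs_zero, Real.zero_rpow hp.ne', Finset.sum_const_zero,
    Real.zero_rpow (one_div_pos.2 hp).ne', sub_zero, Pi.sub_apply] at this
  exact (le_abs_self _).trans_lt this

def combinationMap (A : Finset (Fin n → ℝ)) {E : Type*} [AddCommGroup E] [Module ℝ E] :
    (Fin n → E) →ₗ[ℝ] (A → E) where
  toFun y a := ∑ i, a.1 i • y i
  map_add' y y' := by ext a; simp [Finset.sum_add_distrib]
  map_smul' c y := by ext a; simp [Finset.smul_sum, smul_comm c]

theorem norm_sum_smul_le_norm_combinationMap {A : Finset (Fin n → ℝ)} {a : Fin n → ℝ}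
    (ha : a ∈ A) (y : Fin n → Y) : ‖∑ i, a i • y i‖ ≤ ‖combinationMap A y‖ :=
  norm_le_pi_norm (combinationMap A y) ⟨a, ha⟩

theorem dualBallSup_le_norm_combinationMap (hpq : p.HolderConjugate q)
    {A : Finset (Fin n → ℝ)} {δ : ℝ}
    (hA : ∀ b : Fin n → ℝ, ∑ i, |b i| ^ p ≤ 1 → ∃ a ∈ A, (∑ i, |b i - a i| ^ p) ^ (1 / p) < δ)
    (y : Fin n → Y) : (1 - δ) * dualBallSup q y ≤ ‖combinationMap A y‖ := by
  suffices dualBallSup q y ≤ ‖combinationMap A y‖ + δ * dualBallSup q y by linarith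
  refine dualBallSup_le_of_norm_sum_smul_le hpq fun b hb => ?_
  obtain ⟨a, ha, hba⟩ := hA b hb
  have hsplit : ∑ i, b i • y i = ∑ i, a i • y i + ∑ i, (b i - a i) • y i := by
    simp [sub_smul, Finset.sum_sub_distrib]
  calc ‖∑ i, b i • y i‖ ≤ ‖∑ i, a i • y i‖ + ‖∑ i, (b i - a i) • y i‖ :=
        hsplit ▸ norm_add_le _ _
    _ ≤ ‖combinationMap A y‖ + δ * dualBallSup q y := by
        gcongr
        · exact norm_sum_smul_le_norm_combinationMap ha y
        · exact (norm_sum_smul_le_dualBallSup hpq _ y).trans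
            (mul_le_mul_of_nonneg_right hba.le (dualBallSup_nonneg y))

end CombinationMap

section Bidual

variable {p q : ℝ} {n : ℕ}

/-- A functional on `Y^n` dominated by finitely many norms `‖∑ i, a i • y i‖` is a combination
of functionals `g a` with `∑ a, ‖g a‖ ≤ K` (Hahn–Banach), so it is still dominated on `(Y**)^n`. -/
theorem sum_bidual_apply_le_norm_combinationMap (A : Finset (Fin n → ℝ))
    {v : Fin n → Y →L[ℝ] ℝ} {K : ℝ} (hK : 0 ≤ K)
    (h : ∀ y : Fin n → Y, ∑ i, v i (y i) ≤ K * ‖combinationMap A y‖)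
    (z : Fin n → (Y →L[ℝ] ℝ) →L[ℝ] ℝ) : ∑ i, z i (v i) ≤ K * ‖combinationMap A z‖ := by
  classical
  obtain ⟨F, hFK, hF⟩ := exists_strongDual_comp_eq
    (∑ i, (v i).toLinearMap ∘ₗ LinearMap.proj i) (combinationMap A) hK (by simpa using h)
  set g : A → Y →L[ℝ] ℝ := fun a => F.comp (ContinuousLinearMap.single ℝ (fun _ => Y) a)
  have hv : ∀ i, v i = ∑ a, a.1 i • g a := fun i => by
    ext w
    have hcomb : combinationMap A (Pi.single i w) = ∑ a : A, Pi.single a (a.1 i • w) := by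
      ext a
      simp [combinationMap, Finset.sum_apply, Pi.single_apply]
    have := hF (Pi.single i w)
    simp only [hcomb, map_sum, LinearMap.sum_apply, LinearMap.comp_apply, LinearMap.proj_apply,
      ContinuousLinearMap.coe_coe] at this
    rw [Fintype.sum_eq_single i fun j hj => by simp [Pi.single_eq_of_ne hj],
      Pi.single_eq_same] at this
    simp [g, ← this, Pi.single_smul]
  calc ∑ i, z i (v i) = ∑ a, (∑ i, a.1 i • z i) (g a) := by
        simp [hv, Finset.sum_comm (γ := A)]
    _ ≤ ∑ a, ‖combinationMap A z‖ * ‖g a‖ := Finset.sum_le_sum fun a _ =>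
        (le_abs_self _).trans (((∑ i, a.1 i • z i).le_opNorm _).trans
          (mul_le_mul_of_nonneg_right (norm_sum_smul_le_norm_combinationMap a.2 z)
            (norm_nonneg _)))
    _ ≤ K * ‖combinationMap A z‖ := by
        rw [← Finset.mul_sum, mul_comm]
        exact mul_le_mul_of_nonneg_right ((sum_norm_comp_single_le F).trans hFK)
          (norm_nonneg _)

theorem norm_combinationMap_le_dualBallSup (hpq : p.HolderConjugate q) {A : Finset (Fin n → ℝ)}
    (hA : ∀ a ∈ A, ∑ i, |a i| ^ p ≤ 1) (y : Fin n → Y) :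
    ‖combinationMap A y‖ ≤ dualBallSup q y :=
  (pi_norm_le_iff_of_nonneg (dualBallSup_nonneg y)).2 fun a =>
    (norm_sum_smul_le_dualBallSup hpq a.1 y).trans <| mul_le_of_le_one_left (dualBallSup_nonneg y)
      (Real.rpow_le_one (by positivity) (hA a.1 a.2) (one_div_pos.2 hpq.pos).le)

/-- On the left `dualBallSup` runs over the unit ball of `Y*`, on the right over that of `Y***`.
A finite net of the unit ball of `ℓ_p^n` reduces the bound to finitely many norms, where
`sum_bidual_apply_le_norm_combinationMap` applies. -/
theorem sum_bidual_apply_le_mul_dualBallSup (hpq : p.HolderConjugate q)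
    {v : Fin n → Y →L[ℝ] ℝ} {M : ℝ} (hM : 0 ≤ M)
    (h : ∀ y : Fin n → Y, ∑ i, v i (y i) ≤ M * dualBallSup q y)
    (z : Fin n → (Y →L[ℝ] ℝ) →L[ℝ] ℝ) : ∑ i, z i (v i) ≤ M * dualBallSup q z := by
  have hδ : ∀ δ ∈ Set.Ioo (0 : ℝ) 1, (1 - δ) * ∑ i, z i (v i) ≤ M * dualBallSup q z := by
    rintro δ ⟨hδ0, hδ1⟩
    obtain ⟨A, hA, hAnet⟩ := exists_finset_net_lpBall (n := n) hpq.pos hδ0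
    have hK : 0 ≤ M / (1 - δ) := div_nonneg hM (by linarith)
    have hcomb (y : Fin n → Y) : ∑ i, v i (y i) ≤ M / (1 - δ) * ‖combinationMap A y‖ := by
      rw [div_mul_eq_mul_div, le_div_iff₀ (by linarith)]
      calc (∑ i, v i (y i)) * (1 - δ) ≤ M * ((1 - δ) * dualBallSup q y) := by
            nlinarith [h y]
        _ ≤ M * ‖combinationMap A y‖ :=
            mul_le_mul_of_nonneg_left (dualBallSup_le_norm_combinationMap hpq hAnet y) hM
    have := (sum_bidual_apply_le_norm_combinationMap A hK hcomb z).trans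
      (mul_le_mul_of_nonneg_left (norm_combinationMap_le_dualBallSup hpq hA z) hK)
    rwa [div_mul_eq_mul_div, le_div_iff₀ (by linarith), mul_comm] at this
  have hlim : Filter.Tendsto (fun δ : ℝ => (1 - δ) * ∑ i, z i (v i)) (nhdsWithin 0 (Set.Ioi 0))
      (nhds (∑ i, z i (v i))) := by
    have : Continuous fun δ : ℝ => (1 - δ) * ∑ i, z i (v i) := by fun_prop
    simpa using this.continuousWithinAt.tendsto (x := 0) (s := Set.Ioi 0)
  exact le_of_tendsto hlim (Filter.mem_of_superset (Ioo_mem_nhdsGT one_pos) hδ)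

end Bidual

section Molecules

variable {X : Type*}

theorem molAtom_mem (x x' : X) (y : Y) : molAtom x x' y ∈ MolSpace X Y := by
  simp only [MolSpace, LinearMap.mem_ker, molAtom, map_sub, Finsupp.lsum_single,
    LinearMap.id_apply, sub_self]

theorem eq_sum_molAtom (x0 : X) {m : X →₀ Y} (hm : m ∈ MolSpace X Y) :
    m = ∑ a ∈ m.support, molAtom a x0 (m a) := by
  have hsum : ∑ a ∈ m.support, m a = 0 := by
    simpa [MolSpace, Finsupp.lsum_apply, Finsupp.sum] using hm
  simp only [molAtom, Finset.sum_sub_distrib, ← Finsupp.single_finsetSum, hsum,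
    Finsupp.single_zero, sub_zero]
  exact (Finsupp.sum_single m).symm

theorem exists_eq_sum_molAtom (x0 : X) {m : X →₀ Y} (hm : m ∈ MolSpace X Y) :
    ∃ (n : ℕ) (lam : Fin n → ℝ) (y : Fin n → Y) (x x' : Fin n → X),
      m = ∑ i, lam i • molAtom (x i) (x' i) (y i) := by
  let e := m.support.equivFin.symm
  refine ⟨_, fun _ => 1, fun i => m (e i), fun i => e i, fun _ => x0, ?_⟩
  simp only [one_smul]
  exact (eq_sum_molAtom x0 hm).trans
    ((Finset.sum_coe_sort _ _).symm.trans (Equiv.sum_comp e _).symm)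

theorem phiT_apply_of_eq_sum (T : X → Y →L[ℝ] ℝ) {m : MolSpace X Y} {n : ℕ} {lam : Fin n → ℝ}
    {y : Fin n → Y} {x x' : Fin n → X}
    (hm : (m : X →₀ Y) = ∑ i, lam i • molAtom (x i) (x' i) (y i)) :
    phiT T m = ∑ i, lam i * (T (x i) (y i) - T (x' i) (y i)) := by
  rw [phiT, LinearMap.comp_apply, Submodule.subtype_apply, hm, map_sum]
  simp only [molAtom, map_smul, map_sub, Finsupp.lsum_single, ContinuousLinearMap.coe_coe,
    smul_eq_mul]

theorem phiT_molAtom (T : X → Y →L[ℝ] ℝ) (x x' : X) (y : Y) :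
    phiT T ⟨molAtom x x' y, molAtom_mem x x' y⟩ = T x y - T x' y := by
  simpa using phiT_apply_of_eq_sum T (m := ⟨molAtom x x' y, molAtom_mem x x' y⟩) (n := 1)
    (lam := fun _ => 1) (y := fun _ => y) (x := fun _ => x) (x' := fun _ => x') (by simp)

theorem phiT_injective (x0 : X) {T₁ T₂ : X → Y →L[ℝ] ℝ} (h₁ : T₁ x0 = 0) (h₂ : T₂ x0 = 0)
    (h : phiT T₁ = phiT T₂) : T₁ = T₂ := by
  ext x y
  simpa [phiT_molAtom, h₁, h₂] using LinearMap.congr_fun h ⟨molAtom x x0 y, molAtom_mem x x0 y⟩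

def molAtomL (x x' : X) : Y →ₗ[ℝ] MolSpace X Y :=
  LinearMap.codRestrict (MolSpace X Y) (Finsupp.lsingle x - Finsupp.lsingle x')
    (molAtom_mem x x')

theorem coe_molAtomL (x x' : X) (y : Y) : (molAtomL x x' y : X →₀ Y) = molAtom x x' y :=
  rfl

theorem eq_sum_molAtomL (x0 : X) (m : MolSpace X Y) :
    m = ∑ a ∈ (m : X →₀ Y).support, molAtomL a x0 ((m : X →₀ Y) a) :=
  Subtype.ext <| by simpa only [Submodule.coe_sum, coe_molAtomL] using eq_sum_molAtom x0 m.2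

end Molecules

section MuNorm

variable {p q : ℝ}

theorem muNorm_nonneg (m : X →₀ Y) : 0 ≤ muNorm p q m :=
  Real.sInf_nonneg <| by
    rintro _ ⟨n, lam, y, x, x', -, rfl⟩
    exact mul_nonneg (by positivity) (dualBallSup_nonneg y)

theorem muNorm_le_of_eq_sum {m : X →₀ Y} {n : ℕ} {lam : Fin n → ℝ} {y : Fin n → Y}
    {x x' : Fin n → X} (hm : m = ∑ i, lam i • molAtom (x i) (x' i) (y i)) :
    muNorm p q m ≤ (∑ i, |lam i| ^ p * dist (x i) (x' i) ^ p) ^ (1 / p) * dualBallSup q y := by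
  refine csInf_le ⟨0, ?_⟩ ⟨n, lam, y, x, x', hm, rfl⟩
  rintro _ ⟨n, lam, y, x, x', -, rfl⟩
  exact mul_nonneg (by positivity) (dualBallSup_nonneg y)

theorem muNorm_zero (hp : 0 < p) : muNorm p q (0 : X →₀ Y) = 0 := by
  refine le_antisymm ((muNorm_le_of_eq_sum (n := 0) (lam := Fin.elim0) (y := Fin.elim0)
    (x := Fin.elim0) (x' := Fin.elim0) (by simp)).trans_eq ?_) (muNorm_nonneg 0)
  simp [Real.zero_rpow (inv_pos.2 hp).ne']

theorem le_mul_muNorm (x0 : X) {m : X →₀ Y} (hm : m ∈ MolSpace X Y) {a K : ℝ} (hK : 0 ≤ K)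
    (h : ∀ (n : ℕ) (lam : Fin n → ℝ) (y : Fin n → Y) (x x' : Fin n → X),
      m = ∑ i, lam i • molAtom (x i) (x' i) (y i) →
        a ≤ K * ((∑ i, |lam i| ^ p * dist (x i) (x' i) ^ p) ^ (1 / p) * dualBallSup q y)) :
    a ≤ K * muNorm p q m := by
  obtain ⟨n, lam, y, x, x', hrep⟩ := exists_eq_sum_molAtom x0 hm
  rw [muNorm, ← smul_eq_mul, ← Real.sInf_smul_of_nonneg hK]
  refine le_csInf ⟨_, Set.smul_mem_smul_set ⟨n, lam, y, x, x', hrep, rfl⟩⟩ ?_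
  rintro _ ⟨_, ⟨n, lam, y, x, x', hrep, rfl⟩, rfl⟩
  exact h n lam y x x' hrep

theorem muNorm_smul_le (hp : 0 < p) (x0 : X) {m : X →₀ Y} (hm : m ∈ MolSpace X Y) (c : ℝ) :
    muNorm p q (c • m) ≤ |c| * muNorm p q m := by
  refine le_mul_muNorm x0 hm (abs_nonneg c) fun n lam y x x' hrep => ?_
  refine (muNorm_le_of_eq_sum (lam := fun i => c * lam i) (x := x) (x' := x') (y := y)
    (by simp [hrep, Finset.smul_sum, smul_smul])).trans_eq ?_
  have hsum : ∑ i, |c * lam i| ^ p * dist (x i) (x' i) ^ p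
      = |c| ^ p * ∑ i, |lam i| ^ p * dist (x i) (x' i) ^ p := by
    simp only [Finset.mul_sum, abs_mul, Real.mul_rpow (abs_nonneg c) (abs_nonneg _), mul_assoc]
  rw [hsum, Real.mul_rpow (by positivity) (by positivity), one_div,
    Real.rpow_rpow_inv (abs_nonneg c) hp.ne', mul_assoc]

theorem muNorm_molAtom_le (hp : 0 < p) (hq : 0 < q) (x x' : X) (y : Y) :
    muNorm p q (molAtom x x' y) ≤ dist x x' * ‖y‖ := by
  refine (muNorm_le_of_eq_sum (n := 1) (lam := fun _ => 1) (y := fun _ => y) (x := fun _ => x)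
    (x' := fun _ => x') (by simp)).trans ?_
  rw [Fin.sum_univ_one, abs_one, Real.one_rpow, one_mul, one_div,
    Real.rpow_rpow_inv dist_nonneg hp.ne']
  exact mul_le_mul_of_nonneg_left (dualBallSup_fin_one_le hq y) dist_nonneg

end MuNorm

section LipCohen

variable {p q : ℝ} {Z : Type*} [NormedAddCommGroup Z] [NormedSpace ℝ Z]

theorem LipCohenCond.mono {T : X → Z} {C C' : ℝ} (hT : LipCohenCond p q T C) (hCC' : C ≤ C') :
    LipCohenCond p q T C' := fun n x x' zs lam hlam => by
  refine (hT n x x' zs lam hlam).trans ?_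
  rw [mul_assoc, mul_assoc]
  have hsum : 0 ≤ ∑ i, lam i ^ p * dist (x i) (x' i) ^ p :=
    Finset.sum_nonneg fun i _ => mul_nonneg (Real.rpow_nonneg (hlam i).le _) (by positivity)
  exact mul_le_mul_of_nonneg_right hCC'
    (mul_nonneg (Real.rpow_nonneg hsum _) (dualBallSup_nonneg zs))

/-- Vanishing weights are allowed: a term with `lam i = 0` is replaced by one with weight `1`
and `x' i = x i`, which contributes nothing to either side. -/
theorem LipCohenCond.of_nonneg (hp : 0 < p) {T : X → Z} {C : ℝ} (hT : LipCohenCond p q T C)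
    {n : ℕ} (x x' : Fin n → X) (zs : Fin n → Z →L[ℝ] ℝ) {lam : Fin n → ℝ} (hlam : ∀ i, 0 ≤ lam i) :
    ∑ i, lam i * |zs i (T (x i)) - zs i (T (x' i))| ≤
      C * (∑ i, lam i ^ p * dist (x i) (x' i) ^ p) ^ (1 / p) * dualBallSup q zs := by
  have h := hT n x (fun i => if lam i = 0 then x i else x' i) zs
    (fun i => if lam i = 0 then 1 else lam i)
    (fun i => by split_ifs with h; exacts [one_pos, (hlam i).lt_of_ne' h])
  have hL : ∑ i, lam i * |zs i (T (x i)) - zs i (T (x' i))| = ∑ i, (if lam i = 0 then 1 else lam i)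
      * |zs i (T (x i)) - zs i (T (if lam i = 0 then x i else x' i))| :=
    Finset.sum_congr rfl fun i _ => by split_ifs with h <;> simp [h]
  have hR : ∑ i, lam i ^ p * dist (x i) (x' i) ^ p = ∑ i, (if lam i = 0 then 1 else lam i) ^ p
      * dist (x i) (if lam i = 0 then x i else x' i) ^ p :=
    Finset.sum_congr rfl fun i _ => by split_ifs with h <;> simp [h, Real.zero_rpow hp.ne']
  rwa [hL, hR]

end LipCohen

section Duality

variable {p q : ℝ}

theorem abs_phiT_le_mul_muNorm (hpq : p.HolderConjugate q) (x0 : X) {T : X → Y →L[ℝ] ℝ} {C : ℝ}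
    (hC : 0 ≤ C) (hT : LipCohenCond p q T C) (m : MolSpace X Y) :
    |phiT T m| ≤ C * muNorm p q (m : X →₀ Y) := by
  refine le_mul_muNorm x0 m.2 hC fun n lam y x x' hrep => ?_
  rw [phiT_apply_of_eq_sum T hrep]
  calc |∑ i, lam i * (T (x i) (y i) - T (x' i) (y i))|
      ≤ ∑ i, |lam i| * |NormedSpace.inclusionInDoubleDual ℝ Y (y i) (T (x i))
          - NormedSpace.inclusionInDoubleDual ℝ Y (y i) (T (x' i))| := by
        refine (Finset.abs_sum_le_sum_abs _ _).trans_eq (Finset.sum_congr rfl fun i _ => ?_)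
        simp [abs_mul]
    _ ≤ C * (∑ i, |lam i| ^ p * dist (x i) (x' i) ^ p) ^ (1 / p)
          * dualBallSup q (fun i => NormedSpace.inclusionInDoubleDual ℝ Y (y i)) :=
        hT.of_nonneg hpq.pos x x' _ fun i => abs_nonneg _
    _ ≤ C * ((∑ i, |lam i| ^ p * dist (x i) (x' i) ^ p) ^ (1 / p) * dualBallSup q y) := by
        rw [← mul_assoc]
        gcongr
        exact dualBallSup_inclusionInDoubleDual_le hpq.symm.pos y

theorem lipCohenCond_of_abs_phiT_le (hpq : p.HolderConjugate q) {T : X → Y →L[ℝ] ℝ} {S : ℝ}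
    (hS : 0 ≤ S) (h : ∀ m : MolSpace X Y, |phiT T m| ≤ S * muNorm p q (m : X →₀ Y)) :
    LipCohenCond p q T S := by
  intro n x x' zs lam hlam
  choose s hs_abs hs using fun i => exists_sign_mul_eq_abs (zs i (T (x i) - T (x' i)))
  set A := (∑ i, lam i ^ p * dist (x i) (x' i) ^ p) ^ (1 / p)
  have hA : 0 ≤ A := Real.rpow_nonneg (Finset.sum_nonneg fun i _ =>
    mul_nonneg (Real.rpow_nonneg (hlam i).le _) (by positivity)) _
  have hv (y : Fin n → Y) :
      ∑ i, ((lam i * s i) • (T (x i) - T (x' i))) (y i) ≤ S * A * dualBallSup q y := by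
    have hm : ∑ i, (lam i * s i) • molAtom (x i) (x' i) (y i) ∈ MolSpace X Y :=
      Submodule.sum_mem _ fun i _ => Submodule.smul_mem _ _ (molAtom_mem _ _ _)
    calc ∑ i, ((lam i * s i) • (T (x i) - T (x' i))) (y i)
        = phiT T ⟨_, hm⟩ := by simp [phiT_apply_of_eq_sum T (m := ⟨_, hm⟩) rfl]
      _ ≤ S * muNorm p q (∑ i, (lam i * s i) • molAtom (x i) (x' i) (y i)) :=
        (le_abs_self _).trans (h _)
      _ ≤ S * ((∑ i, |lam i * s i| ^ p * dist (x i) (x' i) ^ p) ^ (1 / p) * dualBallSup q y) :=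
        mul_le_mul_of_nonneg_left (muNorm_le_of_eq_sum rfl) hS
      _ = S * A * dualBallSup q y := by
        simp only [abs_mul, hs_abs, mul_one, abs_of_pos (hlam _), A, mul_assoc]
  calc ∑ i, lam i * |zs i (T (x i)) - zs i (T (x' i))|
      = ∑ i, zs i ((lam i * s i) • (T (x i) - T (x' i))) := by
        refine Finset.sum_congr rfl fun i _ => ?_
        rw [map_smul, smul_eq_mul, mul_assoc, hs, map_sub]
    _ ≤ S * A * dualBallSup q zs :=
        sum_bidual_apply_le_mul_dualBallSup hpq (mul_nonneg hS hA) hv zs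

theorem exists_phiT_eq (hp : 0 < p) (hq : 0 < q) (x0 : X) (φ : MolSpace X Y →ₗ[ℝ] ℝ) {C : ℝ}
    (hC : 0 ≤ C) (hφ : ∀ m : MolSpace X Y, |φ m| ≤ C * muNorm p q (m : X →₀ Y)) :
    ∃ T : X → Y →L[ℝ] ℝ, T x0 = 0 ∧ phiT T = φ := by
  have hbound (x : X) (y : Y) : ‖(φ ∘ₗ molAtomL x x0) y‖ ≤ C * dist x x0 * ‖y‖ := by
    rw [mul_assoc]
    exact (hφ _).trans (mul_le_mul_of_nonneg_left (muNorm_molAtom_le hp hq x x0 y) hC)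
  refine ⟨fun x => (φ ∘ₗ molAtomL x x0).mkContinuous _ (hbound x), ?_, ?_⟩
  · ext y
    have : molAtomL x0 x0 y = 0 := Subtype.ext (sub_self _)
    simp [this]
  · ext m
    conv_rhs => rw [eq_sum_molAtomL x0 m]
    simp [phiT, Finsupp.sum]

theorem sSup_abs_phiT_eq_sInf (hpq : p.HolderConjugate q) (x0 : X) {T : X → Y →L[ℝ] ℝ} {C₀ : ℝ}
    (hC₀ : 0 < C₀) (hT : LipCohenCond p q T C₀) :
    sSup {r : ℝ | ∃ m : MolSpace X Y, muNorm p q (m : X →₀ Y) ≤ 1 ∧ r = |phiT T m|} =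
      sInf {C : ℝ | 0 < C ∧ LipCohenCond p q T C} := by
  set R := {r : ℝ | ∃ m : MolSpace X Y, muNorm p q (m : X →₀ Y) ≤ 1 ∧ r = |phiT T m|}
  have hR0 : (0 : ℝ) ∈ R := ⟨0, by simp [muNorm_zero hpq.pos], by simp⟩
  have hle (C : ℝ) (hC : 0 < C) (hTC : LipCohenCond p q T C) : ∀ r ∈ R, r ≤ C := by
    rintro _ ⟨m, hm, rfl⟩
    exact (abs_phiT_le_mul_muNorm hpq x0 hC.le hTC m).trans (mul_le_of_le_one_right hC.le hm)
  have hbdd : BddAbove R := ⟨C₀, hle C₀ hC₀ hT⟩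
  have hS0 : 0 ≤ sSup R := le_csSup hbdd hR0
  have hS (m : MolSpace X Y) : |phiT T m| ≤ sSup R * muNorm p q (m : X →₀ Y) := by
    rcases (muNorm_nonneg (p := p) (q := q) (m : X →₀ Y)).eq_or_lt with h0 | hpos
    · simpa [← h0] using abs_phiT_le_mul_muNorm hpq x0 hC₀.le hT m
    have hm : muNorm p q (((muNorm p q (m : X →₀ Y))⁻¹ • m : MolSpace X Y) : X →₀ Y) ≤ 1 := by
      refine (muNorm_smul_le hpq.pos x0 m.2 _).trans_eq ?_
      rw [abs_of_pos (inv_pos.2 hpos), inv_mul_cancel₀ hpos.ne']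
    have := le_csSup hbdd ⟨_, hm, rfl⟩
    rw [map_smul, smul_eq_mul, abs_mul, abs_of_pos (inv_pos.2 hpos), inv_mul_le_iff₀ hpos] at this
    linarith
  have hTS := lipCohenCond_of_abs_phiT_le hpq hS0 hS
  refine le_antisymm (le_csInf ⟨C₀, hC₀, hT⟩ fun C ⟨hC, hTC⟩ => csSup_le ⟨0, hR0⟩ (hle C hC hTC)) ?_
  refine le_of_forall_pos_le_add fun ε hε =>
    csInf_le ⟨0, fun C hC => hC.1.le⟩ ⟨by positivity, hTS.mono (by linarith)⟩

end Duality

theorem lipCohen_dual_of_molecules_general (x0 : X) (p q : ℝ)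
    (hp : 1 < p) (hpq : 1 / p + 1 / q = 1) :
    -- `φ_T` is `μ_p`-bounded for every Lipschitz-Cohen strongly `p`-summing `T`
    (∀ T : X → (Y →L[ℝ] ℝ), T x0 = 0 → (∃ C > 0, LipCohenCond p q T C) →
      ∃ C ≥ 0, ∀ m : MolSpace X Y, |phiT T m| ≤ C * muNorm p q (m : X →₀ Y)) ∧
    -- the map `T ↦ φ_T` is injective on this class
    (∀ T₁ T₂ : X → (Y →L[ℝ] ℝ), T₁ x0 = 0 → T₂ x0 = 0 →
      (∃ C > 0, LipCohenCond p q T₁ C) → (∃ C > 0, LipCohenCond p q T₂ C) →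
      phiT T₁ = phiT T₂ → T₁ = T₂) ∧
    -- every `μ_p`-bounded linear functional arises as `φ_T` for such a `T`
    (∀ φ : MolSpace X Y →ₗ[ℝ] ℝ,
      (∃ C ≥ 0, ∀ m : MolSpace X Y, |φ m| ≤ C * muNorm p q (m : X →₀ Y)) →
      ∃ T : X → (Y →L[ℝ] ℝ), T x0 = 0 ∧ (∃ C > 0, LipCohenCond p q T C) ∧
        phiT T = φ) ∧
    -- the bijection is isometric: `‖φ_T‖ = d_p^L(T)`
    (∀ T : X → (Y →L[ℝ] ℝ), T x0 = 0 → (∃ C > 0, LipCohenCond p q T C) →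
      sSup {r : ℝ | ∃ m : MolSpace X Y, muNorm p q (m : X →₀ Y) ≤ 1 ∧
          r = |phiT T m|} =
        sInf {C : ℝ | 0 < C ∧ LipCohenCond p q T C}) := by
  have hpq : p.HolderConjugate q := Real.holderConjugate_iff.2 ⟨hp, by simpa using hpq⟩
  refine ⟨fun T _ ⟨C, hC, hT⟩ => ⟨C, hC.le, abs_phiT_le_mul_muNorm hpq x0 hC.le hT⟩,
    fun T₁ T₂ h₁ h₂ _ _ h => phiT_injective x0 h₁ h₂ h, fun φ ⟨C, hC, hφ⟩ => ?_,
    fun T _ ⟨C, hC, hT⟩ => sSup_abs_phiT_eq_sInf hpq x0 hC hT⟩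
  obtain ⟨T, hT0, rfl⟩ := exists_phiT_eq hpq.pos hpq.symm.pos x0 φ hC hφ
  exact ⟨T, hT0, ⟨C + 1, by positivity,
    (lipCohenCond_of_abs_phiT_le hpq hC hφ).mono (by linarith)⟩, rfl⟩

/-- `T ↦ φ_T` is an isometric bijection from the Lipschitz-Cohen
strongly `p`-summing maps `T : X → Y*` with `T(0) = 0` onto the `μ_p`-bounded
linear functionals on `ℱ(X;Y)`:  `𝒟_p^L(X;Y*) = (ℱ(X;Y), μ_p)*`. -/
theorem lipCohen_dual_of_molecules [CompleteSpace Y] (x0 : X) (p q : ℝ)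
    (hp : 1 < p) (hpq : 1 / p + 1 / q = 1) :
    -- `φ_T` is `μ_p`-bounded for every Lipschitz-Cohen strongly `p`-summing `T`
    (∀ T : X → (Y →L[ℝ] ℝ), T x0 = 0 → (∃ C > 0, LipCohenCond p q T C) →
      ∃ C ≥ 0, ∀ m : MolSpace X Y, |phiT T m| ≤ C * muNorm p q (m : X →₀ Y)) ∧
    -- the map `T ↦ φ_T` is injective on this class
    (∀ T₁ T₂ : X → (Y →L[ℝ] ℝ), T₁ x0 = 0 → T₂ x0 = 0 →
      (∃ C > 0, LipCohenCond p q T₁ C) → (∃ C > 0, LipCohenCond p q T₂ C) →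
      phiT T₁ = phiT T₂ → T₁ = T₂) ∧
    -- every `μ_p`-bounded linear functional arises as `φ_T` for such a `T`
    (∀ φ : MolSpace X Y →ₗ[ℝ] ℝ,
      (∃ C ≥ 0, ∀ m : MolSpace X Y, |φ m| ≤ C * muNorm p q (m : X →₀ Y)) →
      ∃ T : X → (Y →L[ℝ] ℝ), T x0 = 0 ∧ (∃ C > 0, LipCohenCond p q T C) ∧
        phiT T = φ) ∧
    -- the bijection is isometric: `‖φ_T‖ = d_p^L(T)`
    (∀ T : X → (Y →L[ℝ] ℝ), T x0 = 0 → (∃ C > 0, LipCohenCond p q T C) →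
      sSup {r : ℝ | ∃ m : MolSpace X Y, muNorm p q (m : X →₀ Y) ≤ 1 ∧
          r = |phiT T m|} =
        sInf {C : ℝ | 0 < C ∧ LipCohenCond p q T C}) :=
  lipCohen_dual_of_molecules_general x0 p q hp hpq

end
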